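/- The neighborhood N = {(0,1), (1,0), (1,−1), (−1,−1)} (neighborhood 195 in the 8-bit numbering of subsets of the Moore neighborhood) admits a timed crossover gate of size 12 × 12 and delay 17. -/

import Mathlib

/-! Sandpile models on ℤ² and timed crossover gates. -/

abbrev Cell : Type := ℤ × ℤ
abbrev Config : Type := Cell → ℕ

namespace Sandpile

/-- The threshold of a sandpile model is the cardinality of its neighborhood. -/
def θ (𝒩 : Finset Cell) : ℕ := 𝒩.card

/-- The parallel sandpile dynamics: each cell reaching the threshold topples,
sending one grain to each of its out-neighbors. -/
def F (𝒩 : Finset Cell) (c : Config) : Config := fun p =>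
  c p - θ 𝒩 * (if θ 𝒩 ≤ c p then 1 else 0)
    + ∑ p' ∈ 𝒩, (if θ 𝒩 ≤ c (p - p') then 1 else 0)

/-- The configuration with a single grain at cell `p`. -/
def one (p : Cell) : Config := fun q => if q = p then 1 else 0

/-- A configuration is stable when every cell is below the threshold. -/
def Stable (𝒩 : Finset Cell) (c : Config) : Prop := ∀ p, c p < θ 𝒩

/-- The rectangle {0,…,M−1} × {0,…,N'−1}. -/
def Rect (M N' : ℕ) : Set Cell :=
  {p | 0 ≤ p.1 ∧ p.1 < (M : ℤ) ∧ 0 ≤ p.2 ∧ p.2 < (N' : ℤ)}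

/-- The four corners of the rectangle. -/
def Corners (M N' : ℕ) : Set Cell :=
  {(0, 0), ((M : ℤ) - 1, 0), (0, (N' : ℤ) - 1), ((M : ℤ) - 1, (N' : ℤ) - 1)}

/-- The four sides of the rectangle. -/
def side (M N' : ℕ) (i : Fin 4) : Set Cell :=
  if i = 0 then {p | p.1 = 0 ∧ 0 ≤ p.2 ∧ p.2 < (N' : ℤ)}
  else if i = 1 then {p | p.2 = 0 ∧ 0 ≤ p.1 ∧ p.1 < (M : ℤ)}
  else if i = 2 then {p | p.1 = (M : ℤ) - 1 ∧ 0 ≤ p.2 ∧ p.2 < (N' : ℤ)}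
  else {p | p.2 = (N' : ℤ) - 1 ∧ 0 ≤ p.1 ∧ p.1 < (M : ℤ)}

/-- A timed crossover gate of size M × N' and delay T for the sandpile model 𝒩:
a stable configuration `g` supported on the rectangle, together with four
non-corner cells `n`, `e`, `s`, `w` on four pairwise different sides, `n, s`
(resp. `w, e`) on opposite sides, such that adding a grain at `n` (resp. `w`)
makes `s` (resp. `e`) reach the threshold at time exactly `T`, while no cell
on the two other sides reaches the threshold at any time `t ≤ T`. -/
def IsTimedCrossoverGate (𝒩 : Finset Cell) (M N' T : ℕ)
    (g : Config) (n e s w : Cell) : Prop :=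
  Stable 𝒩 g ∧
  (∀ p, p ∉ Rect M N' → g p = 0) ∧
  n ∈ Rect M N' ∧ e ∈ Rect M N' ∧ s ∈ Rect M N' ∧ w ∈ Rect M N' ∧
  n ∉ Corners M N' ∧ e ∉ Corners M N' ∧ s ∉ Corners M N' ∧ w ∉ Corners M N' ∧
  ∃ iN iE iS iW : Fin 4,
    n ∈ side M N' iN ∧ e ∈ side M N' iE ∧ s ∈ side M N' iS ∧ w ∈ side M N' iW ∧
    ((iN : ℤ) - (iS : ℤ)).natAbs = 2 ∧
    ((iW : ℤ) - (iE : ℤ)).natAbs = 2 ∧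
    ({iN, iE, iS, iW} : Finset (Fin 4)) = Finset.univ ∧
    θ 𝒩 ≤ (F 𝒩)^[T] (g + one n) s ∧
    (∀ p ∈ side M N' iW ∪ side M N' iE, ∀ t ≤ T, (F 𝒩)^[t] (g + one n) p < θ 𝒩) ∧
    θ 𝒩 ≤ (F 𝒩)^[T] (g + one w) e ∧
    (∀ p ∈ side M N' iN ∪ side M N' iS, ∀ t ≤ T, (F 𝒩)^[t] (g + one w) p < θ 𝒩)

/-! The gate is explicit, and both conditions concern the first 17 steps of two orbits of finite
configurations, so they are decided by computation. The dynamics is evaluated only on the window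
`[-1, 12]²`, truncating after every step; truncation does not alter the orbit as long as every
cell at the threshold has all its out-neighbors inside the window, which is checked at each
step. -/

section Simulation

def window (o : Cell) (m n : ℕ) : Set Cell := {p | p - o ∈ Rect m n}

instance (o : Cell) (m n : ℕ) : DecidablePred (· ∈ window o m n) := fun p =>
  inferInstanceAs (Decidable (0 ≤ (p - o).1 ∧ (p - o).1 < m ∧ 0 ≤ (p - o).2 ∧ (p - o).2 < n))

lemma mem_window {o p : Cell} {m n : ℕ} :
    p ∈ window o m n ↔ o.1 ≤ p.1 ∧ p.1 < o.1 + m ∧ o.2 ≤ p.2 ∧ p.2 < o.2 + n := by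
  simp only [window, Rect, Set.mem_ofPred_eq, Prod.fst_sub, Prod.snd_sub]
  omega

lemma window_zero {m n : ℕ} : window 0 m n = Rect m n := by
  simp [window]

lemma exists_of_mem_window {o p : Cell} {m n : ℕ} (hp : p ∈ window o m n) :
    ∃ i < m, ∃ j < n, p = (o.1 + i, o.2 + j) := by
  rw [mem_window] at hp
  exact ⟨(p.1 - o.1).toNat, by omega, (p.2 - o.2).toNat, by omega,
    Prod.ext (by dsimp only; omega) (by dsimp only; omega)⟩

/-- Row `j` of the table `d` holds the values at `o + (0, j), o + (1, j), …`. -/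
def ofTable (o : Cell) (d : List (List ℕ)) : Config := fun p =>
  if o.1 ≤ p.1 ∧ o.2 ≤ p.2 then (d.getD (p.2 - o.2).toNat []).getD (p.1 - o.1).toNat 0 else 0

def tabulate (o : Cell) (m n : ℕ) (c : Config) : List (List ℕ) :=
  (List.range n).map fun j : ℕ => (List.range m).map fun i : ℕ => c (o.1 + i, o.2 + j)

lemma ofTable_eq_zero_of_not_mem {o p : Cell} {m n : ℕ} {d : List (List ℕ)}
    (hd : d.length ≤ n) (hrows : ∀ r ∈ d, r.length ≤ m) (hp : p ∉ window o m n) :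
    ofTable o d p = 0 := by
  rw [mem_window] at hp
  unfold ofTable
  split_ifs with ho
  · by_cases hrow : (p.2 - o.2).toNat < d.length
    · have hcol : m ≤ (p.1 - o.1).toNat := by omega
      rw [List.getD_eq_getElem _ _ hrow]
      exact List.getD_eq_default _ _ ((hrows _ (List.getElem_mem hrow)).trans hcol)
    · rw [List.getD_eq_default d [] (by omega)]
      rfl
  · rfl

/-- Going through a table makes the kernel evaluate each cell only once when it iterates
`truncate ∘ F`. -/
def truncate (o : Cell) (m n : ℕ) (c : Config) : Config := ofTable o (tabulate o m n c)

lemma truncate_apply_of_mem {o p : Cell} {m n : ℕ} (c : Config) (hp : p ∈ window o m n) :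
    truncate o m n c p = c p := by
  obtain ⟨i, hi, j, hj, rfl⟩ := exists_of_mem_window hp
  simp only [truncate, ofTable, tabulate, le_add_iff_nonneg_right, Int.natCast_nonneg, and_self,
    if_true, add_sub_cancel_left, Int.toNat_natCast, List.getD_eq_getElem?_getD, List.getElem?_map,
    List.getElem?_range hi, List.getElem?_range hj, Option.map_some, Option.getD_some]

lemma truncate_apply_of_not_mem {o p : Cell} {m n : ℕ} (c : Config) (hp : p ∉ window o m n) :
    truncate o m n c p = 0 :=
  ofTable_eq_zero_of_not_mem (by simp [tabulate]) (by simp [tabulate]) hp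

lemma truncate_eq_self {o : Cell} {m n : ℕ} {c : Config} (hc : ∀ p ∉ window o m n, c p = 0) :
    truncate o m n c = c := by
  funext p
  by_cases hp : p ∈ window o m n
  · exact truncate_apply_of_mem c hp
  · rw [truncate_apply_of_not_mem c hp, hc p hp]

def Confined (𝒩 : Finset Cell) (W : Set Cell) (c : Config) : Prop :=
  ∀ p, θ 𝒩 ≤ c p → ∀ p' ∈ 𝒩, p + p' ∈ W

lemma F_apply_eq_zero_of_not_mem {𝒩 : Finset Cell} {W : Set Cell} {c : Config}
    (hc : ∀ p ∉ W, c p = 0) (hconf : Confined 𝒩 W c) {q : Cell} (hq : q ∉ W) : F 𝒩 c q = 0 := by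
  have hquiet : ∀ p' ∈ 𝒩, ¬θ 𝒩 ≤ c (q - p') := fun p' hp' hfire =>
    hq (by simpa using hconf _ hfire p' hp')
  simp only [F, hc q hq, Nat.zero_sub, zero_add]
  exact Finset.sum_eq_zero fun p' hp' => if_neg (hquiet p' hp')

lemma confined_of_forall {𝒩 : Finset Cell} {o : Cell} {m n : ℕ} {c : Config}
    (hc : ∀ p ∉ window o m n, c p = 0)
    (h : ∀ i < m, ∀ j < n, θ 𝒩 ≤ c (o.1 + i, o.2 + j) →
      ∀ p' ∈ 𝒩, (o.1 + i, o.2 + j) + p' ∈ window o m n) :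
    Confined 𝒩 (window o m n) c := by
  intro p hp p' hp'
  by_cases hw : p ∈ window o m n
  · obtain ⟨i, hi, j, hj, rfl⟩ := exists_of_mem_window hw
    exact h i hi j hj hp p' hp'
  · rw [hc p hw, Nat.le_zero, θ, Finset.card_eq_zero] at hp
    simp [hp] at hp'

def simulate (𝒩 : Finset Cell) (o : Cell) (m n : ℕ) (c : Config) (t : ℕ) : Config :=
  (truncate o m n ∘ F 𝒩)^[t] (truncate o m n c)

variable {𝒩 : Finset Cell} {o : Cell} {m n : ℕ} {c : Config}

lemma simulate_succ (t : ℕ) :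
    simulate 𝒩 o m n c (t + 1) = truncate o m n (F 𝒩 (simulate 𝒩 o m n c t)) :=
  Function.iterate_succ_apply' ..

lemma simulate_apply_of_not_mem {p : Cell} (hp : p ∉ window o m n) :
    ∀ t, simulate 𝒩 o m n c t p = 0
  | 0 => truncate_apply_of_not_mem c hp
  | t + 1 => by rw [simulate_succ]; exact truncate_apply_of_not_mem _ hp

theorem iterate_F_eq_simulate (hc : ∀ p ∉ window o m n, c p = 0) {T : ℕ}
    (h : ∀ t < T, ∀ i < m, ∀ j < n, θ 𝒩 ≤ simulate 𝒩 o m n c t (o.1 + i, o.2 + j) →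
      ∀ p' ∈ 𝒩, (o.1 + i, o.2 + j) + p' ∈ window o m n) :
    ∀ t ≤ T, (F 𝒩)^[t] c = simulate 𝒩 o m n c t := by
  intro t ht
  induction t with
  | zero => exact (truncate_eq_self hc).symm
  | succ t ih =>
    have hsupp : ∀ p ∉ window o m n, simulate 𝒩 o m n c t p = 0 :=
      fun p hp => simulate_apply_of_not_mem hp t
    rw [Function.iterate_succ_apply', ih (by omega), simulate_succ, truncate_eq_self]
    exact fun p hp =>
      F_apply_eq_zero_of_not_mem hsupp (confined_of_forall hsupp (h t (by omega))) hp

end Simulation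

lemma forall_mem_side_zero_union_side_two {M N' : ℕ} {P : Cell → Prop}
    (h : ∀ j < N', P (0, j) ∧ P ((M : ℤ) - 1, j)) : ∀ p ∈ side M N' 0 ∪ side M N' 2, P p := by
  rintro ⟨x, y⟩ hp
  simp only [side, Fin.isValue, ↓reduceIte, Fin.reduceEq, Set.mem_union, Set.mem_ofPred_eq] at hp
  obtain ⟨j, rfl⟩ : ∃ j : ℕ, y = j := ⟨y.toNat, by omega⟩
  rcases hp with ⟨rfl, -, hj⟩ | ⟨rfl, -, hj⟩
  · exact (h j (by omega)).1
  · exact (h j (by omega)).2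

lemma forall_mem_side_three_union_side_one {M N' : ℕ} {P : Cell → Prop}
    (h : ∀ i < M, P (i, (N' : ℤ) - 1) ∧ P (i, 0)) : ∀ p ∈ side M N' 3 ∪ side M N' 1, P p := by
  rintro ⟨x, y⟩ hp
  simp only [side, Fin.isValue, Fin.reduceEq, ↓reduceIte, one_ne_zero, Set.mem_union,
    Set.mem_ofPred_eq] at hp
  obtain ⟨i, rfl⟩ : ∃ i : ℕ, x = i := ⟨x.toNat, by omega⟩
  rcases hp with ⟨rfl, -, hi⟩ | ⟨rfl, -, hi⟩
  · exact (h i (by omega)).1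
  · exact (h i (by omega)).2

def nbhd195 : Finset Cell := {(0, 1), (1, 0), (1, -1), (-1, -1)}

def gateTable : List (List ℕ) :=
  [[0, 0, 0, 0, 0, 0, 0, 0, 3, 0, 0, 0],
   [3, 3, 0, 0, 0, 0, 0, 3, 0, 0, 3, 3],
   [0, 3, 0, 0, 0, 0, 0, 0, 3, 3, 0, 0],
   [0, 3, 3, 0, 0, 0, 0, 0, 3, 3, 0, 0],
   [0, 0, 3, 0, 0, 0, 3, 3, 0, 0, 3, 0],
   [0, 0, 3, 0, 0, 3, 0, 0, 0, 3, 0, 0],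
   [0, 0, 3, 0, 3, 0, 0, 0, 3, 0, 0, 0],
   [0, 0, 3, 3, 0, 0, 0, 0, 0, 3, 0, 0],
   [0, 0, 0, 0, 0, 0, 0, 0, 0, 0, 3, 0],
   [0, 0, 0, 0, 0, 3, 3, 3, 0, 3, 0, 0],
   [0, 0, 0, 3, 3, 0, 0, 3, 3, 0, 0, 0],
   [0, 0, 3, 0, 0, 0, 0, 0, 0, 0, 0, 0]]

def gate : Config := ofTable 0 gateTable

lemma gate_eq_zero_of_not_mem {p : Cell} (hp : p ∉ Rect 12 12) : gate p = 0 :=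
  ofTable_eq_zero_of_not_mem (m := 12) (n := 12) (by decide) (by decide) (by rwa [window_zero])

lemma gate_stable : Stable nbhd195 gate := by
  intro p
  by_cases hp : p ∈ Rect 12 12
  · obtain ⟨i, hi, j, hj, rfl⟩ := exists_of_mem_window (window_zero (m := 12) (n := 12) ▸ hp)
    clear hp
    revert i j
    decide +kernel
  · rw [gate_eq_zero_of_not_mem hp]
    decide

lemma gate_add_one_eq_zero_of_not_mem {q : Cell} (hq : q ∈ Rect 12 12) :
    ∀ p ∉ window (-1, -1) 14 14, (gate + one q) p = 0 := by
  intro p hp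
  rw [mem_window] at hp
  have hpq : p ≠ q := by rintro rfl; simp only [Rect, Set.mem_ofPred_eq] at hq; omega
  have hpR : p ∉ Rect 12 12 := by simp only [Rect, Set.mem_ofPred_eq]; omega
  simp [one, hpq, gate_eq_zero_of_not_mem hpR]

def gateRun (q : Cell) : ℕ → Config := simulate nbhd195 (-1, -1) 14 14 (gate + one q)

lemma north_signal :
    θ nbhd195 ≤ (F nbhd195)^[17] (gate + one (2, 11)) (8, 0) ∧
    ∀ p ∈ side 12 12 0 ∪ side 12 12 2, ∀ t ≤ 17,
      (F nbhd195)^[t] (gate + one (2, 11)) p < θ nbhd195 := by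
  have hrun : ∀ t ≤ 17, (F nbhd195)^[t] (gate + one (2, 11)) = gateRun (2, 11) t :=
    iterate_F_eq_simulate (gate_add_one_eq_zero_of_not_mem (by simp [Rect])) (by decide +kernel)
  have hfires : θ nbhd195 ≤ gateRun (2, 11) 17 (8, 0) := by decide +kernel
  have hsides : ∀ t ≤ 17, ∀ j : ℕ, j < 12 →
      gateRun (2, 11) t (0, j) < θ nbhd195 ∧ gateRun (2, 11) t (11, j) < θ nbhd195 := by
    decide +kernel
  refine ⟨hrun 17 le_rfl ▸ hfires, forall_mem_side_zero_union_side_two fun j hj => ?_⟩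
  exact ⟨fun t ht => hrun t ht ▸ (hsides t ht j hj).1, fun t ht => hrun t ht ▸ (hsides t ht j hj).2⟩

lemma west_signal :
    θ nbhd195 ≤ (F nbhd195)^[17] (gate + one (0, 1)) (11, 1) ∧
    ∀ p ∈ side 12 12 3 ∪ side 12 12 1, ∀ t ≤ 17,
      (F nbhd195)^[t] (gate + one (0, 1)) p < θ nbhd195 := by
  have hrun : ∀ t ≤ 17, (F nbhd195)^[t] (gate + one (0, 1)) = gateRun (0, 1) t :=
    iterate_F_eq_simulate (gate_add_one_eq_zero_of_not_mem (by simp [Rect])) (by decide +kernel)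
  have hfires : θ nbhd195 ≤ gateRun (0, 1) 17 (11, 1) := by decide +kernel
  have hsides : ∀ t ≤ 17, ∀ i : ℕ, i < 12 →
      gateRun (0, 1) t (i, 11) < θ nbhd195 ∧ gateRun (0, 1) t (i, 0) < θ nbhd195 := by
    decide +kernel
  refine ⟨hrun 17 le_rfl ▸ hfires, forall_mem_side_three_union_side_one fun i hi => ?_⟩
  exact ⟨fun t ht => hrun t ht ▸ (hsides t ht i hi).1, fun t ht => hrun t ht ▸ (hsides t ht i hi).2⟩

theorem nbhd195_timed_crossover :
    ∃ g n e s w, IsTimedCrossoverGate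
      ({(0,1),(1,0),(1,-1),(-1,-1)} : Finset Cell) 12 12 17 g n e s w :=
  ⟨gate, (2, 11), (11, 1), (8, 0), (0, 1), gate_stable, fun _ => gate_eq_zero_of_not_mem,
    by simp [Rect], by simp [Rect], by simp [Rect], by simp [Rect],
    by simp [Corners], by simp [Corners], by simp [Corners], by simp [Corners],
    3, 2, 1, 0, by simp [side], by simp [side], by simp [side], by simp [side],
    by decide, by decide, by decide, north_signal.1, north_signal.2, west_signal.1, west_signal.2⟩

end Sandpile
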